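/- arXiv:2512.02926 — 4 statements merged into one kernel-verified Lean document; each statement's English description precedes it below -/
import Mathlib

section
/- Auxiliary limit for the derivative term: Let ϑ ∈ 𝒱 be continuously differentiable on (0,∞) and monotone on a neighborhood of +∞, with degree α ≥ 0 and ϑ(log n) → ∞ as n → ∞. Then (1/ϑ(log n)) ∫_3^n | (d/dt) ϑ(log t) | / (log log t) dt → 0 as n → ∞. -/
open MeasureTheory Filter Real Set

noncomputable section

/-- `L` is slowly varying at infinity. -/
def SlowlyVarying (L : ℝ → ℝ) : Prop :=
  ∀ c : ℝ, 0 < c → Tendsto (fun x => L (c * x) / L x) atTop (nhds 1)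

/-- `ϑ` belongs to the class `𝒱` with degree `α`. -/
def MemV (ϑ : ℝ → ℝ) (α : ℝ) : Prop :=
  ϑ 0 = 0 ∧ 0 ≤ α ∧
    ∃ F L : ℝ → ℝ, (∀ x, ϑ x = F x * L x) ∧
      Tendsto (fun x => F x / x ^ α) atTop (nhds 1) ∧ SlowlyVarying L

open Topology

/-!
Once `ϑ` is monotone on `[x₀, ∞)`, so is `g = ϑ ∘ log` on `[A, ∞)` for `A ≥ exp x₀`, and then
`∫_A^n |g'| ≤ |g n - g A|`. As the weight `1 / log log t` is below any `δ > 0` from some `A` on,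
the integral is at most `C_A + δ (g n + |g A|)`; dividing by `g n → ∞` leaves at most `δ`.
-/

lemma MonotoneOn.intervalIntegral_abs_deriv_le {f : ℝ → ℝ} {a b : ℝ} (hab : a ≤ b)
    (hf : MonotoneOn f (Icc a b)) : ∫ t in a..b, |deriv f t| ≤ f b - f a := by
  have hsign : ∀ t ∈ Ioo a b, 0 ≤ deriv f t := fun t ht => by
    rw [← derivWithin_of_isOpen isOpen_Ioo ht]
    exact (hf.mono Ioo_subset_Icc_self).derivWithin_nonneg
  have habs : ∫ t in a..b, |deriv f t| = ∫ t in a..b, deriv f t := by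
    refine intervalIntegral.integral_congr_ae ?_
    filter_upwards [Measure.ae_ne volume b] with t htb ht
    rw [uIoc_of_le hab] at ht
    exact abs_of_nonneg (hsign t ⟨ht.1, ht.2.lt_of_ne htb⟩)
  -- Lebesgue's bound for monotone functions; it needs no differentiability of `f`.
  have hmem := (uIcc_of_le hab ▸ hf).intervalIntegral_deriv_mem_uIcc
  rw [uIcc_of_le (sub_nonneg.2 (hf (left_mem_Icc.2 hab) (right_mem_Icc.2 hab) hab))] at hmem
  exact habs ▸ hmem.2

lemma AntitoneOn.intervalIntegral_abs_deriv_le {f : ℝ → ℝ} {a b : ℝ} (hab : a ≤ b)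
    (hf : AntitoneOn f (Icc a b)) : ∫ t in a..b, |deriv f t| ≤ f a - f b := by
  simpa [deriv.neg', abs_neg, sub_eq_add_neg, add_comm] using
    hf.neg.intervalIntegral_abs_deriv_le hab

lemma intervalIntegral_abs_deriv_mul_le {f w : ℝ → ℝ} {a b δ : ℝ} (hab : a ≤ b) (hδ : 0 ≤ δ)
    (hf : MonotoneOn f (Icc a b) ∨ AntitoneOn f (Icc a b))
    (hf' : IntervalIntegrable (deriv f) volume a b)
    (hfw : IntervalIntegrable (fun t => |deriv f t| * w t) volume a b)
    (hw : ∀ t ∈ Icc a b, w t ≤ δ) :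
    ∫ t in a..b, |deriv f t| * w t ≤ δ * |f b - f a| := by
  have hvar : ∫ t in a..b, |deriv f t| ≤ |f b - f a| := by
    rcases hf with hf | hf
    · exact (hf.intervalIntegral_abs_deriv_le hab).trans (le_abs_self _)
    · exact (hf.intervalIntegral_abs_deriv_le hab).trans (neg_sub (f b) (f a) ▸ neg_le_abs _)
  calc ∫ t in a..b, |deriv f t| * w t ≤ ∫ t in a..b, |deriv f t| * δ :=
        intervalIntegral.integral_mono_on hab hfw (hf'.abs.mul_const δ)
          fun t ht => mul_le_mul_of_nonneg_left (hw t ht) (abs_nonneg _)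
    _ = δ * ∫ t in a..b, |deriv f t| := by rw [intervalIntegral.integral_mul_const, mul_comm]
    _ ≤ δ * |f b - f a| := mul_le_mul_of_nonneg_left hvar hδ

lemma ContinuousOn.intervalIntegrable_of_Ici {f : ℝ → ℝ} {a y z : ℝ}
    (hf : ContinuousOn f (Ici a)) (hy : a ≤ y) (hz : a ≤ z) :
    IntervalIntegrable f volume y z :=
  (hf.mono fun _ ht => (le_min hy hz).trans ht.1).intervalIntegrable

lemma intervalIntegral_abs_deriv_mul_le_add {g w : ℝ → ℝ} {a B y δ : ℝ} (haB : a ≤ B)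
    (hBy : B ≤ y) (hδ : 0 ≤ δ) (hg' : ContinuousOn (deriv g) (Ici a))
    (hmono : MonotoneOn g (Ici B) ∨ AntitoneOn g (Ici B))
    (hw : ContinuousOn w (Ici a)) (hwδ : ∀ t ≥ B, w t ≤ δ) :
    ∫ t in a..y, |deriv g t| * w t ≤
      (∫ t in a..B, |deriv g t| * w t) + δ * |g y - g B| := by
  have hgw : ContinuousOn (fun t => |deriv g t| * w t) (Ici a) := hg'.abs.mul hw
  have hay := haB.trans hBy
  rw [← intervalIntegral.integral_add_adjacent_intervals
    (hgw.intervalIntegrable_of_Ici le_rfl haB) (hgw.intervalIntegrable_of_Ici haB hay)]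
  have hsub : Icc B y ⊆ Ici B := Icc_subset_Ici_self
  gcongr
  exact intervalIntegral_abs_deriv_mul_le hBy hδ (hmono.imp (·.mono hsub) (·.mono hsub))
    (hg'.intervalIntegrable_of_Ici haB hay) (hgw.intervalIntegrable_of_Ici haB hay)
    fun t ht => hwδ t ht.1

theorem tendsto_inv_mul_integral_abs_deriv_mul_nhds_zero {ι : Type*} {l : Filter ι}
    {g w : ℝ → ℝ} {a : ℝ} {x : ι → ℝ}
    (hg' : ContinuousOn (deriv g) (Ici a))
    (hmono : ∃ b, MonotoneOn g (Ici b) ∨ AntitoneOn g (Ici b))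
    (hw : ContinuousOn w (Ici a)) (hw₀ : ∀ t ≥ a, 0 ≤ w t) (hw_lim : Tendsto w atTop (𝓝 0))
    (hx : Tendsto x l atTop) (hgx : Tendsto (fun i => g (x i)) l atTop) :
    Tendsto (fun i => (g (x i))⁻¹ * ∫ t in Icc a (x i), |deriv g t| * w t) l (𝓝 0) := by
  suffices Tendsto (fun i => (g (x i))⁻¹ * ∫ t in a..x i, |deriv g t| * w t) l (𝓝 0) by
    refine this.congr' ?_
    filter_upwards [hx.eventually_ge_atTop a] with i hi
    rw [integral_Icc_eq_integral_Ioc, intervalIntegral.integral_of_le hi]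
  refine tendsto_order.2 ⟨fun ε hε => ?_, fun ε hε => ?_⟩
  · filter_upwards [hx.eventually_ge_atTop a, hgx.eventually_gt_atTop 0] with i hxi hgi
    exact hε.trans_le <| mul_nonneg (inv_nonneg.2 hgi.le) <|
      intervalIntegral.integral_nonneg hxi fun t ht => mul_nonneg (abs_nonneg _) (hw₀ t ht.1)
  obtain ⟨b, hb⟩ := hmono
  obtain ⟨c, hc⟩ : ∃ c, ∀ t ≥ c, w t ≤ ε / 2 :=
    eventually_atTop.1 (hw_lim.eventually (eventually_le_nhds (half_pos hε)))
  set B := max a (max b c)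
  have hbB : Ici B ⊆ Ici b := Ici_subset_Ici.2 ((le_max_left _ _).trans (le_max_right _ _))
  have hcB : c ≤ B := (le_max_right _ _).trans (le_max_right _ _)
  set K := (∫ t in a..B, |deriv g t| * w t) + ε / 2 * |g B|
  have hK : Tendsto (fun i => K * (g (x i))⁻¹) l (𝓝 0) := by
    simpa using (tendsto_inv_atTop_zero.comp hgx).const_mul K
  filter_upwards [hx.eventually_ge_atTop B, hgx.eventually_gt_atTop 0,
    hK.eventually (gt_mem_nhds (half_pos hε))] with i hxi hgi hKi
  have hsplit := intervalIntegral_abs_deriv_mul_le_add (le_max_left _ _) hxi (half_pos hε).le hg'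
    (hb.imp (·.mono hbB) (·.mono hbB)) hw fun t ht => hc t (hcB.trans ht)
  have hvar : |g (x i) - g B| ≤ g (x i) + |g B| := (abs_sub _ _).trans_eq (by rw [abs_of_pos hgi])
  calc (g (x i))⁻¹ * ∫ t in a..x i, |deriv g t| * w t
      ≤ (g (x i))⁻¹ * ((∫ t in a..B, |deriv g t| * w t) + ε / 2 * (g (x i) + |g B|)) := by
        gcongr
        exact hsplit.trans (by gcongr)
    _ = K * (g (x i))⁻¹ + ε / 2 := by field_simp; ring
    _ < ε := by linarith

theorem aux_limit_derivative_term_general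
    (ϑ : ℝ → ℝ)
    (hC1 : ContDiffOn ℝ 1 ϑ (Set.Ioi 0))
    (hmono : ∃ x₀ : ℝ, MonotoneOn ϑ (Set.Ici x₀) ∨ AntitoneOn ϑ (Set.Ici x₀))
    (hinf : Tendsto (fun n : ℕ => ϑ (Real.log n)) atTop atTop) :
    Tendsto
      (fun n : ℕ =>
        (ϑ (Real.log n))⁻¹ *
          ∫ t in Set.Icc (3 : ℝ) (n : ℝ),
            |deriv (fun s : ℝ => ϑ (Real.log s)) t| / Real.log (Real.log t))
      atTop (nhds 0) := by
  have hlog : ∀ t ≥ (3 : ℝ), 1 < log t := fun t ht =>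
    (lt_trans (by norm_num) log_three_gt_d9).trans_le (log_le_log (by norm_num) ht)
  have hg : ContDiffOn ℝ 1 (fun s => ϑ (log s)) (Ioi 1) :=
    hC1.comp (contDiffOn_log.mono fun t ht => (zero_lt_one.trans ht).ne') fun t ht => log_pos ht
  have hg' : ContinuousOn (deriv fun s => ϑ (log s)) (Ici 3) :=
    (hg.continuousOn_deriv_of_isOpen isOpen_Ioi le_rfl).mono fun t ht =>
      (by norm_num : (1 : ℝ) < 3).trans_le ht
  obtain ⟨x₀, hx₀⟩ := hmono
  have hlog_mono : MonotoneOn log (Ici (exp x₀)) :=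
    strictMonoOn_log.monotoneOn.mono fun t ht => (exp_pos x₀).trans_le ht
  have hlog_maps : MapsTo log (Ici (exp x₀)) (Ici x₀) := fun t ht =>
    (le_log_iff_exp_le ((exp_pos x₀).trans_le ht)).2 ht
  have hw : ContinuousOn (fun t => (log (log t))⁻¹) (Ici 3) :=
    fun t (ht : 3 ≤ t) => (((continuousAt_log (by linarith : 0 < t).ne').log
      (zero_lt_one.trans (hlog t ht)).ne').inv₀ (log_pos (hlog t ht)).ne').continuousWithinAt
  simp only [div_eq_mul_inv]
  exact tendsto_inv_mul_integral_abs_deriv_mul_nhds_zero hg'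
    ⟨exp x₀, hx₀.imp (·.comp hlog_mono hlog_maps) (·.comp_MonotoneOn hlog_mono hlog_maps)⟩ hw
    (fun t ht => (inv_pos.2 (log_pos (hlog t ht))).le)
    (tendsto_inv_atTop_zero.comp (tendsto_log_atTop.comp tendsto_log_atTop))
    tendsto_natCast_atTop_atTop hinf

/-- Auxiliary limit for the derivative term: for `ϑ ∈ 𝒱` continuously differentiable on
`(0,∞)`, monotone near `+∞`, with `ϑ(log n) → ∞`, one has
`(1/ϑ(log n)) ∫_3^n |d/dt ϑ(log t)| / log log t dt → 0` as `n → ∞`. -/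
theorem aux_limit_derivative_term
    (ϑ : ℝ → ℝ) (α : ℝ) (hϑ : MemV ϑ α)
    (hC1 : ContDiffOn ℝ 1 ϑ (Set.Ioi 0))
    (hmono : ∃ x₀ : ℝ, MonotoneOn ϑ (Set.Ici x₀) ∨ AntitoneOn ϑ (Set.Ici x₀))
    (hinf : Tendsto (fun n : ℕ => ϑ (Real.log n)) atTop atTop) :
    Tendsto
      (fun n : ℕ =>
        (ϑ (Real.log n))⁻¹ *
          ∫ t in Set.Icc (3 : ℝ) (n : ℝ),
            |deriv (fun s : ℝ => ϑ (Real.log s)) t| / Real.log (Real.log t))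
      atTop (nhds 0) :=
  aux_limit_derivative_term_general ϑ hC1 hmono hinf
end
end

section
/- Law of the random prime-power product: Let n ≥ 2 and let k be a positive integer all of whose prime factors are at most n (in particular, any k ≤ n). Then P[ Π_{p ∈ P_n} p^{ε_p} = k ] = (1/k) Π_{p ∈ P_n} (1 − 1/p). -/
open MeasureTheory ProbabilityTheory Filter Real Set
open scoped ENNReal NNReal

noncomputable section

/-- The set of primes at most `n`, as a finset. -/
def primesUpTo (n : ℕ) : Finset ℕ := (Finset.range (n + 1)).filter Nat.Prime

/-- `X` is geometric with parameter `1 - 1/p`: `P[X = m] = (1 - 1/p) p^{-m}`. -/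
def GeomLaw {Ω : Type*} [MeasurableSpace Ω] (P : Measure Ω) (p : ℕ) (X : Ω → ℕ) : Prop :=
  ∀ m : ℕ, P {ω | X ω = m} = (1 - (p : ℝ≥0∞)⁻¹) * ((p : ℝ≥0∞)⁻¹) ^ m

/-! By unique factorization the event `∏ p^{ε_p} = k` is the intersection over `p ∈ Pₙ` of the
events `ε_p = v_p(k)`; independence and the geometric laws give it probability
`∏ (1 - 1/p) p^{-v_p(k)} = (1/k) ∏ (1 - 1/p)`. -/

lemma mem_primesUpTo {n p : ℕ} : p ∈ primesUpTo n ↔ p ≤ n ∧ p.Prime := by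
  simp [primesUpTo]

lemma Nat.prod_pow_eq_iff_eq_factorization {S : Finset ℕ} (hS : ∀ p ∈ S, p.Prime) {k : ℕ}
    (hk : k ≠ 0) (hkS : k.primeFactors ⊆ S) (e : ℕ → ℕ) :
    ∏ p ∈ S, p ^ e p = k ↔ ∀ p ∈ S, e p = k.factorization p := by
  constructor
  · rintro rfl p hp
    rw [Nat.factorization_prod fun q hq => pow_ne_zero _ (hS q hq).ne_zero, Finset.sum_apply',
      Finset.sum_eq_single p (fun q hq hqp => by simp [(hS q hq).factorization_pow, hqp])
        (absurd hp), (hS p hp).factorization_pow, Finsupp.single_eq_same]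
  · intro he
    rw [Finset.prod_congr rfl fun p hp => congrArg (p ^ ·) (he p hp),
      ← Finsupp.prod_of_support_subset _ (by simpa using hkS) (· ^ ·) fun _ _ => pow_zero _]
    exact Nat.prod_factorization_pow_eq_self hk

theorem ProbabilityTheory.iIndepFun.measure_forall_eq_eq_prod_of_subtype {ι β Ω : Type*}
    [MeasurableSpace Ω] [MeasurableSpace β] [MeasurableSingletonClass β] {μ : Measure Ω}
    {q : ι → Prop} {X : ι → Ω → β} (h : iIndepFun (fun i : Subtype q => X i) μ)
    {S : Finset ι} (hS : ∀ i ∈ S, q i) (a : ι → β) :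
    μ {ω | ∀ i ∈ S, X i ω = a i} = ∏ i ∈ S, μ {ω | X i ω = a i} := by
  classical
  calc μ {ω | ∀ i ∈ S, X i ω = a i}
      = μ (⋂ i ∈ S.subtype q, X i ⁻¹' {a i}) := by
        congr 1
        ext ω
        simp only [Set.mem_ofPred_eq, Set.mem_iInter, Set.mem_preimage, Set.mem_singleton_iff,
          Finset.mem_subtype, Subtype.forall]
        exact ⟨fun hω i _ hi => hω i hi, fun hω i hi => hω i (hS i hi) hi⟩
    _ = ∏ i ∈ S.subtype q, μ (X i ⁻¹' {a i}) :=
        h.measure_inter_preimage_eq_mul _ fun _ _ => measurableSet_singleton _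
    _ = ∏ i ∈ S, μ {ω | X i ω = a i} := Finset.prod_subtype_of_mem (fun i => μ (X i ⁻¹' {a i})) hS

lemma ENNReal.prod_inv_natCast_pow {ι : Type*} (S : Finset ι) (b e : ι → ℕ) :
    ∏ i ∈ S, ((b i : ℝ≥0∞)⁻¹) ^ e i = ((∏ i ∈ S, b i ^ e i : ℕ) : ℝ≥0∞)⁻¹ := by
  simp_rw [← ENNReal.inv_pow]
  rw [← ENNReal.prod_inv_distrib fun _ _ _ _ _ => Or.inr (by simp)]
  push_cast
  rfl

theorem law_of_prime_power_product_general
    {Ω : Type*} [MeasurableSpace Ω] (P : Measure Ω)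
    (ε : ℕ → Ω → ℕ)
    (hindep : iIndepFun (fun p : {p : ℕ // p.Prime} => ε p) P)
    (hgeom : ∀ p, Nat.Prime p → GeomLaw P p (ε p))
    (n : ℕ) (k : ℕ) (hk : 1 ≤ k)
    (hdiv : ∀ p : ℕ, Nat.Prime p → p ∣ k → p ≤ n) :
    P {ω | ∏ p ∈ primesUpTo n, p ^ ε p ω = k} =
      (k : ℝ≥0∞)⁻¹ * ∏ p ∈ primesUpTo n, (1 - (p : ℝ≥0∞)⁻¹) := by
  have hprimes : ∀ p ∈ primesUpTo n, p.Prime := fun p hp => (mem_primesUpTo.mp hp).2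
  have hk0 : k ≠ 0 := by omega
  have hsupp : k.primeFactors ⊆ primesUpTo n := fun p hp =>
    have ⟨hp, hpk, _⟩ := Nat.mem_primeFactors.mp hp
    mem_primesUpTo.mpr ⟨hdiv p hp hpk, hp⟩
  have hprod := Nat.prod_pow_eq_iff_eq_factorization hprimes hk0 hsupp
  calc P {ω | ∏ p ∈ primesUpTo n, p ^ ε p ω = k}
      = P {ω | ∀ p ∈ primesUpTo n, ε p ω = k.factorization p} := by simp_rw [hprod]
    _ = ∏ p ∈ primesUpTo n, P {ω | ε p ω = k.factorization p} :=
      hindep.measure_forall_eq_eq_prod_of_subtype hprimes _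
    _ = ∏ p ∈ primesUpTo n, (1 - (p : ℝ≥0∞)⁻¹) * ((p : ℝ≥0∞)⁻¹) ^ k.factorization p :=
      Finset.prod_congr rfl fun p hp => hgeom p (hprimes p hp) _
    _ = (k : ℝ≥0∞)⁻¹ * ∏ p ∈ primesUpTo n, (1 - (p : ℝ≥0∞)⁻¹) := by
      rw [Finset.prod_mul_distrib, ENNReal.prod_inv_natCast_pow, (hprod _).mpr fun _ _ => rfl,
        mul_comm]

/-- Law of the random prime-power product: if every prime factor of `k ≥ 1` is at most `n`,
then `P[∏_{p ∈ Pₙ} p^{ε_p} = k] = (1/k) ∏_{p ∈ Pₙ} (1 − 1/p)`. -/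
theorem law_of_prime_power_product
    {Ω : Type*} [MeasurableSpace Ω] (P : Measure Ω) [IsProbabilityMeasure P]
    (ε : ℕ → Ω → ℕ) (hmeas : ∀ p, Nat.Prime p → Measurable (ε p))
    (hindep : iIndepFun (fun p : {p : ℕ // p.Prime} => ε p) P)
    (hgeom : ∀ p, Nat.Prime p → GeomLaw P p (ε p))
    (n : ℕ) (hn : 2 ≤ n) (k : ℕ) (hk : 1 ≤ k)
    (hdiv : ∀ p : ℕ, Nat.Prime p → p ∣ k → p ≤ n) :
    P {ω | ∏ p ∈ primesUpTo n, p ^ ε p ω = k} =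
      (k : ℝ≥0∞)⁻¹ * ∏ p ∈ primesUpTo n, (1 - (p : ℝ≥0∞)⁻¹) :=
  law_of_prime_power_product_general P ε hindep hgeom n k hk hdiv
end
end

section
/- Harmonic representation of additive functionals: Let n ≥ 2, let A_n be the event { Π_{p ∈ P_n} p^{ε_p} ≤ n }, and let φ : ℕ → ℝ be any additive arithmetic function (φ(ab) = φ(a) + φ(b) for coprime a, b, determined by its values on prime powers). Then for every k ∈ {1,…,n}, P[ Π_{p ∈ P_n} p^{ε_p} = k | A_n ] = 1/(k L_n) where L_n = Σ_{j=1}^n 1/j; consequently φ(H_n) has the same law as Σ_{p ∈ P_n} φ(p^{ε_p}) conditioned on A_n, i.e. for every bounded measurable Ψ : ℝ → ℝ, E[Ψ(φ(H_n))] = E[ Ψ( Σ_{p ∈ P_n} φ(p^{ε_p}) ) · 1_{A_n} ] / P[A_n]. -/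
open MeasureTheory ProbabilityTheory Filter Real Set
open scoped ENNReal NNReal

noncomputable section

/-- The random variable `H` follows the harmonic distribution on `{1, …, n}`. -/
def HarmonicLaw {Ω : Type*} [MeasurableSpace Ω] (P : Measure Ω) (n : ℕ) (H : Ω → ℕ) : Prop :=
  ∀ k ∈ Finset.Icc 1 n,
    P {ω | H ω = k} = ENNReal.ofReal (1 / (k * ∑ j ∈ Finset.Icc 1 n, (1 : ℝ) / j))

lemma prime_of_mem_primesUpTo {n p : ℕ} (hp : p ∈ primesUpTo n) : p.Prime :=
  (mem_primesUpTo.mp hp).2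

lemma prod_primesUpTo_pow_factorization {n k : ℕ} (hk : k ≠ 0) (hkn : k ≤ n) :
    ∏ p ∈ primesUpTo n, p ^ k.factorization p = k := by
  conv_rhs => rw [← Nat.prod_pow_prime_padicValNat k hk (n + 1) (Nat.lt_succ_of_le hkn)]
  exact Finset.prod_congr rfl fun p hp => by
    rw [Nat.factorization_def k (prime_of_mem_primesUpTo hp)]

lemma factorization_prod_pow_primes {s : Finset ℕ} (hs : ∀ p ∈ s, p.Prime) (e : ℕ → ℕ)
    {p : ℕ} (hp : p ∈ s) : (∏ q ∈ s, q ^ e q).factorization p = e p := by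
  rw [Nat.factorization_prod fun q hq => pow_ne_zero _ (hs q hq).ne_zero,
    Finsupp.finsetSum_apply, Finset.sum_eq_single_of_mem p hp fun q hq hqp => ?_,
    (hs p hp).factorization_pow, Finsupp.single_eq_same]
  rw [(hs q hq).factorization_pow, Finsupp.single_eq_of_ne' hqp]

lemma prod_primesUpTo_pow_eq_iff {n k : ℕ} (hk : k ≠ 0) (hkn : k ≤ n) (e : ℕ → ℕ) :
    ∏ p ∈ primesUpTo n, p ^ e p = k ↔ ∀ p ∈ primesUpTo n, e p = k.factorization p := by
  constructor
  · rintro rfl p hp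
    exact (factorization_prod_pow_primes (fun _ => prime_of_mem_primesUpTo) e hp).symm
  · intro he
    rw [Finset.prod_congr rfl fun p hp => by rw [he p hp]]
    exact prod_primesUpTo_pow_factorization hk hkn

lemma prod_pow_primes_ne_zero {s : Finset ℕ} (hs : ∀ p ∈ s, p.Prime) (e : ℕ → ℕ) :
    ∏ p ∈ s, p ^ e p ≠ 0 :=
  Finset.prod_ne_zero_iff.mpr fun p hp => pow_ne_zero _ (hs p hp).ne_zero

lemma map_prod_of_coprime {φ : ℕ → ℝ}
    (hφ : ∀ a b : ℕ, Nat.Coprime a b → φ (a * b) = φ a + φ b) {ι : Type*} (s : Finset ι)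
    (f : ι → ℕ) (hf : (s : Set ι).Pairwise (Function.onFun Nat.Coprime f)) :
    φ (∏ i ∈ s, f i) = ∑ i ∈ s, φ (f i) := by
  classical
  induction s using Finset.induction_on with
  | empty => simpa using hφ 1 1 (Nat.coprime_one_left 1)
  | insert i s hi ih =>
    rw [Finset.coe_insert, Set.pairwise_insert] at hf
    rw [Finset.prod_insert hi, Finset.sum_insert hi, hφ _ _ (Nat.Coprime.prod_right fun j hj =>
      (hf.2 j hj fun hij => hi (hij ▸ hj)).1), ih hf.1]

lemma map_prod_pow_primes {φ : ℕ → ℝ}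
    (hφ : ∀ a b : ℕ, Nat.Coprime a b → φ (a * b) = φ a + φ b)
    {s : Finset ℕ} (hs : ∀ p ∈ s, p.Prime) (e : ℕ → ℕ) :
    φ (∏ p ∈ s, p ^ e p) = ∑ p ∈ s, φ (p ^ e p) :=
  map_prod_of_coprime hφ s _ fun p hp q hq hpq =>
    Nat.coprime_pow_primes _ _ (hs p hp) (hs q hq) hpq

lemma MeasureTheory.Measure.ext_of_sum_singleton_eq_one {α : Type*} [MeasurableSpace α]
    [MeasurableSingletonClass α] [Countable α] {μ ν : Measure α}
    [IsProbabilityMeasure μ] [IsProbabilityMeasure ν] (s : Finset α)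
    (hμν : ∀ a ∈ s, μ {a} = ν {a}) (hμ : ∑ a ∈ s, μ {a} = 1) : μ = ν := by
  have null_off : ∀ ρ : Measure α, IsProbabilityMeasure ρ → ∑ a ∈ s, ρ {a} = 1 →
      ∀ a ∉ s, ρ {a} = 0 := fun ρ _ hρ a ha =>
    measure_mono_null (Set.singleton_subset_iff.mpr ha)
      ((prob_compl_eq_zero_iff s.measurableSet).mpr (by rwa [← sum_measure_singleton]))
  have hν : ∑ a ∈ s, ν {a} = 1 := by rwa [← Finset.sum_congr rfl hμν]
  refine Measure.ext_of_singleton fun a => ?_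
  by_cases ha : a ∈ s
  · exact hμν a ha
  · rw [null_off μ ‹_› hμ a ha, null_off ν ‹_› hν a ha]

lemma integral_cond_eq_setIntegral_div {α : Type*} [MeasurableSpace α] (μ : Measure α)
    (s : Set α) (f : α → ℝ) :
    ∫ x, f x ∂μ[|s] = (∫ x in s, f x ∂μ) / (μ s).toReal := by
  rw [ProbabilityTheory.cond, integral_smul_measure, ENNReal.toReal_inv, smul_eq_mul,
    inv_mul_eq_div]

def harmonicWeight (n k : ℕ) : ℝ≥0∞ :=
  ENNReal.ofReal (1 / (k * ∑ j ∈ Finset.Icc 1 n, (1 : ℝ) / j))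

lemma harmonicWeight_eq {n k : ℕ} (hk : k ∈ Finset.Icc 1 n) :
    harmonicWeight n k = (k : ℝ≥0∞)⁻¹ / ∑ j ∈ Finset.Icc 1 n, (j : ℝ≥0∞)⁻¹ := by
  have ofReal_inv : ∀ j ∈ Finset.Icc 1 n, ENNReal.ofReal (1 / j) = (j : ℝ≥0∞)⁻¹ :=
    fun j hj => by
      rw [one_div, ENNReal.ofReal_inv_of_pos (by exact_mod_cast (Finset.mem_Icc.mp hj).1),
        ENNReal.ofReal_natCast]
  have hL : 0 < ∑ j ∈ Finset.Icc 1 n, (1 : ℝ) / j :=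
    Finset.sum_pos (fun j hj => by have := (Finset.mem_Icc.mp hj).1; positivity) ⟨k, hk⟩
  rw [harmonicWeight, ← div_div, ENNReal.ofReal_div_of_pos hL, ofReal_inv k hk,
    ENNReal.ofReal_sum_of_nonneg fun j _ => by positivity, Finset.sum_congr rfl ofReal_inv]

lemma sum_Icc_inv_ne_zero {n : ℕ} (hn : 1 ≤ n) : ∑ j ∈ Finset.Icc 1 n, (j : ℝ≥0∞)⁻¹ ≠ 0 := by
  simpa using ⟨1, le_rfl, hn⟩

lemma sum_Icc_inv_ne_top (n : ℕ) : ∑ j ∈ Finset.Icc 1 n, (j : ℝ≥0∞)⁻¹ ≠ ⊤ :=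
  ENNReal.sum_ne_top.mpr fun _ hj => ENNReal.inv_ne_top.mpr
    (Nat.cast_ne_zero.mpr (Nat.one_le_iff_ne_zero.mp (Finset.mem_Icc.mp hj).1))

lemma sum_harmonicWeight {n : ℕ} (hn : 1 ≤ n) : ∑ k ∈ Finset.Icc 1 n, harmonicWeight n k = 1 := by
  simp_rw [Finset.sum_congr rfl fun k hk => harmonicWeight_eq hk, div_eq_mul_inv,
    ← Finset.sum_mul, ENNReal.mul_inv_cancel (sum_Icc_inv_ne_zero hn) (sum_Icc_inv_ne_top n)]

lemma HarmonicLaw.map_singleton {Ω : Type*} [MeasurableSpace Ω] {P : Measure Ω} {n : ℕ}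
    {X : Ω → ℕ} (hX : Measurable X) (hlaw : HarmonicLaw P n X) :
    ∀ k ∈ Finset.Icc 1 n, P.map X {k} = harmonicWeight n k := fun k hk => by
  rw [Measure.map_apply hX (measurableSet_singleton k)]
  exact hlaw k hk

lemma HarmonicLaw.map_eq {Ω₁ Ω₂ : Type*} [MeasurableSpace Ω₁] [MeasurableSpace Ω₂]
    {P₁ : Measure Ω₁} {P₂ : Measure Ω₂} [IsProbabilityMeasure P₁] [IsProbabilityMeasure P₂]
    {n : ℕ} (hn : 1 ≤ n) {X₁ : Ω₁ → ℕ} {X₂ : Ω₂ → ℕ} (hX₁ : Measurable X₁) (hX₂ : Measurable X₂)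
    (h₁ : HarmonicLaw P₁ n X₁) (h₂ : HarmonicLaw P₂ n X₂) : P₁.map X₁ = P₂.map X₂ := by
  have : IsProbabilityMeasure (P₁.map X₁) := Measure.isProbabilityMeasure_map hX₁.aemeasurable
  have : IsProbabilityMeasure (P₂.map X₂) := Measure.isProbabilityMeasure_map hX₂.aemeasurable
  refine Measure.ext_of_sum_singleton_eq_one _
    (fun k hk => (h₁.map_singleton hX₁ k hk).trans (h₂.map_singleton hX₂ k hk).symm) ?_
  rw [Finset.sum_congr rfl (h₁.map_singleton hX₁), sum_harmonicWeight hn]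

lemma HarmonicLaw.integral_comp_eq {Ω₁ Ω₂ : Type*} [MeasurableSpace Ω₁] [MeasurableSpace Ω₂]
    {P₁ : Measure Ω₁} {P₂ : Measure Ω₂} [IsProbabilityMeasure P₁] [IsProbabilityMeasure P₂]
    {n : ℕ} (hn : 1 ≤ n) {X₁ : Ω₁ → ℕ} {X₂ : Ω₂ → ℕ} (hX₁ : Measurable X₁) (hX₂ : Measurable X₂)
    (h₁ : HarmonicLaw P₁ n X₁) (h₂ : HarmonicLaw P₂ n X₂) (f : ℕ → ℝ) :
    ∫ ω, f (X₁ ω) ∂P₁ = ∫ ω, f (X₂ ω) ∂P₂ := by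
  rw [← integral_map hX₁.aemeasurable measurable_from_top.aestronglyMeasurable,
    h₁.map_eq hn hX₁ hX₂ h₂, integral_map hX₂.aemeasurable measurable_from_top.aestronglyMeasurable]

lemma one_sub_inv_prime_ne_zero {p : ℕ} (hp : p.Prime) : 1 - (p : ℝ≥0∞)⁻¹ ≠ 0 := by
  rw [Ne, tsub_eq_zero_iff_le, not_le, ENNReal.inv_lt_one]
  exact_mod_cast hp.one_lt

lemma one_sub_inv_ne_top (p : ℕ) : 1 - (p : ℝ≥0∞)⁻¹ ≠ ⊤ :=
  ne_top_of_le_ne_top ENNReal.one_ne_top tsub_le_self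

lemma prod_primesUpTo_one_sub_inv_ne_zero (n : ℕ) : ∏ p ∈ primesUpTo n, (1 - (p : ℝ≥0∞)⁻¹) ≠ 0 :=
  Finset.prod_ne_zero_iff.mpr fun _ hp => one_sub_inv_prime_ne_zero (prime_of_mem_primesUpTo hp)

lemma prod_primesUpTo_inv_pow_factorization {n k : ℕ} (hk : k ≠ 0) (hkn : k ≤ n) :
    ∏ p ∈ primesUpTo n, ((p : ℝ≥0∞)⁻¹) ^ k.factorization p = (k : ℝ≥0∞)⁻¹ := by
  simp_rw [← ENNReal.inv_pow]
  rw [← ENNReal.prod_inv_distrib fun p _ q _ _ => Or.inr (ENNReal.pow_ne_top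
    (ENNReal.natCast_ne_top q))]
  exact_mod_cast congrArg (fun m : ℕ => (m : ℝ≥0∞)⁻¹) (prod_primesUpTo_pow_factorization hk hkn)

section PrimeExponents

variable {Ω : Type*} [MeasurableSpace Ω] {P : Measure Ω} {ε : ℕ → Ω → ℕ}

def primeProduct (ε : ℕ → Ω → ℕ) (n : ℕ) (ω : Ω) : ℕ := ∏ p ∈ primesUpTo n, p ^ ε p ω

lemma measurable_primeProduct (hmeas : ∀ p, Nat.Prime p → Measurable (ε p)) (n : ℕ) :
    Measurable (primeProduct ε n) :=
  Finset.measurable_prod _ fun p hp =>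
    measurable_from_top.comp (hmeas p (prime_of_mem_primesUpTo hp))

lemma measure_primeProduct_eq (hindep : iIndepFun (fun p : {p : ℕ // p.Prime} => ε p) P)
    (hgeom : ∀ p, Nat.Prime p → GeomLaw P p (ε p)) {n k : ℕ} (hk : k ∈ Finset.Icc 1 n) :
    P {ω | primeProduct ε n ω = k} =
      (∏ p ∈ primesUpTo n, (1 - (p : ℝ≥0∞)⁻¹)) * (k : ℝ≥0∞)⁻¹ := by
  obtain ⟨hk1, hkn⟩ := Finset.mem_Icc.mp hk
  have hk0 : k ≠ 0 := Nat.one_le_iff_ne_zero.mp hk1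
  have hfiber : {ω | primeProduct ε n ω = k} =
      ⋂ p ∈ (primesUpTo n).subtype Nat.Prime, ε p ⁻¹' {k.factorization p} := by
    ext ω
    simp [primeProduct, prod_primesUpTo_pow_eq_iff hk0 hkn, mem_primesUpTo]
    tauto
  have hgeom_fiber : ∀ p ∈ primesUpTo n, P (ε p ⁻¹' {k.factorization p}) =
      (1 - (p : ℝ≥0∞)⁻¹) * ((p : ℝ≥0∞)⁻¹) ^ k.factorization p :=
    fun p hp => hgeom p (prime_of_mem_primesUpTo hp) _
  rw [hfiber, hindep.meas_biInter fun p _ => ⟨_, measurableSet_singleton _, rfl⟩,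
    Finset.prod_subtype_of_mem (fun p => P (ε p ⁻¹' {k.factorization p}))
      fun _ => prime_of_mem_primesUpTo,
    Finset.prod_congr rfl hgeom_fiber,
    Finset.prod_mul_distrib, prod_primesUpTo_inv_pow_factorization hk0 hkn]

lemma measure_primeProduct_le (hmeas : ∀ p, Nat.Prime p → Measurable (ε p))
    (hindep : iIndepFun (fun p : {p : ℕ // p.Prime} => ε p) P)
    (hgeom : ∀ p, Nat.Prime p → GeomLaw P p (ε p)) (n : ℕ) :
    P {ω | primeProduct ε n ω ≤ n} =
      (∏ p ∈ primesUpTo n, (1 - (p : ℝ≥0∞)⁻¹)) * ∑ k ∈ Finset.Icc 1 n, (k : ℝ≥0∞)⁻¹ := by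
  have hX := measurable_primeProduct hmeas n
  have hpreimage : {ω | primeProduct ε n ω ≤ n} =
      primeProduct ε n ⁻¹' ↑(Finset.Icc 1 n) := by
    ext ω
    simp [primeProduct, Nat.one_le_iff_ne_zero,
      prod_pow_primes_ne_zero (fun _ => prime_of_mem_primesUpTo) (ε · ω)]
  rw [hpreimage, ← sum_measure_preimage_singleton _ fun k _ => hX (measurableSet_singleton k),
    Finset.mul_sum]
  exact Finset.sum_congr rfl fun k hk => measure_primeProduct_eq hindep hgeom hk

lemma harmonicLaw_cond_primeProduct (hmeas : ∀ p, Nat.Prime p → Measurable (ε p))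
    (hindep : iIndepFun (fun p : {p : ℕ // p.Prime} => ε p) P)
    (hgeom : ∀ p, Nat.Prime p → GeomLaw P p (ε p)) (n : ℕ) :
    HarmonicLaw P[|{ω | primeProduct ε n ω ≤ n}] n (primeProduct ε n) := by
  intro k hk
  have hsub : {ω | primeProduct ε n ω = k} ⊆
      {ω | primeProduct ε n ω ≤ n} := fun ω (hω : _ = k) =>
    hω.trans_le (Finset.mem_Icc.mp hk).2
  rw [cond_apply (measurableSet_le (measurable_primeProduct hmeas n) measurable_const),
    Set.inter_eq_self_of_subset_right hsub, measure_primeProduct_eq hindep hgeom hk,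
    measure_primeProduct_le hmeas hindep hgeom, mul_comm, ← div_eq_mul_inv,
    ENNReal.mul_div_mul_left _ _ (prod_primesUpTo_one_sub_inv_ne_zero n)
      (ENNReal.prod_ne_top fun p _ => one_sub_inv_ne_top p)]
  exact (harmonicWeight_eq hk).symm

end PrimeExponents

/-- Harmonic representation of additive functionals: with `Aₙ = {∏_{p ∈ Pₙ} p^{ε_p} ≤ n}`,
the conditional law of `∏_{p ∈ Pₙ} p^{ε_p}` given `Aₙ` is the harmonic law on `{1,…,n}`, and
for any additive function `φ` and bounded measurable `Ψ`,
`E[Ψ(φ(Hₙ))] = E[Ψ(∑_{p ∈ Pₙ} φ(p^{ε_p})) 1_{Aₙ}]/P[Aₙ]`. -/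
theorem harmonic_representation_of_additive_functionals
    {Ω : Type*} [MeasurableSpace Ω] (P : Measure Ω) [IsProbabilityMeasure P]
    (ε : ℕ → Ω → ℕ) (hmeas : ∀ p, Nat.Prime p → Measurable (ε p))
    (hindep : iIndepFun (fun p : {p : ℕ // p.Prime} => ε p) P)
    (hgeom : ∀ p, Nat.Prime p → GeomLaw P p (ε p))
    {Ω' : Type*} [MeasurableSpace Ω'] (P' : Measure Ω') [IsProbabilityMeasure P']
    (n : ℕ) (hn : 2 ≤ n)
    (H : Ω' → ℕ) (hHmeas : Measurable H) (hH : HarmonicLaw P' n H)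
    (φ : ℕ → ℝ) (hφ : ∀ a b : ℕ, Nat.Coprime a b → φ (a * b) = φ a + φ b) :
    (∀ k ∈ Finset.Icc 1 n,
      P[{ω | ∏ p ∈ primesUpTo n, p ^ ε p ω = k} | {ω | ∏ p ∈ primesUpTo n, p ^ ε p ω ≤ n}] =
        ENNReal.ofReal (1 / (k * ∑ j ∈ Finset.Icc 1 n, (1 : ℝ) / j))) ∧
    ∀ Ψ : ℝ → ℝ, Measurable Ψ → (∃ C, ∀ x, |Ψ x| ≤ C) →
      ∫ ω, Ψ (φ (H ω)) ∂P' =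
        (∫ ω in {ω | ∏ p ∈ primesUpTo n, p ^ ε p ω ≤ n},
            Ψ (∑ p ∈ primesUpTo n, φ (p ^ ε p ω)) ∂P) /
          (P {ω | ∏ p ∈ primesUpTo n, p ^ ε p ω ≤ n}).toReal := by
  have hlaw := harmonicLaw_cond_primeProduct hmeas hindep hgeom n
  refine ⟨hlaw, fun Ψ _ _ => ?_⟩
  have : IsProbabilityMeasure P[|{ω | primeProduct ε n ω ≤ n}] :=
    cond_isProbabilityMeasure <| by
      rw [measure_primeProduct_le hmeas hindep hgeom]
      exact mul_ne_zero (prod_primesUpTo_one_sub_inv_ne_zero n) (sum_Icc_inv_ne_zero (by omega))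
  rw [hH.integral_comp_eq (by omega) hHmeas (measurable_primeProduct hmeas n) hlaw
    (fun k => Ψ (φ k)), integral_cond_eq_setIntegral_div]
  simp_rw [primeProduct, map_prod_pow_primes hφ fun _ => prime_of_mem_primesUpTo]
end
end

section
/- Reduction of the main theorem to the joint statistic: Let ϑ ∈ 𝒱 with degree α ≥ 0, let φ = ι[ϑ] be the induced additive function, and set Z_{n,1} = (1/ϑ(log n)) Σ_{p ∈ P_n} φ(p^{ε_p}) and Z_{n,2} = (1/log n) Σ_{p ∈ P_n} ε_p log p. Then for every bounded measurable Ψ : ℝ → ℝ and every n ≥ 2, E[ Ψ( φ(H_n)/ϑ(log n) ) ] = E[ Ψ(Z_{n,1}) · 1_{ Z_{n,2} ≤ 1 } ] / P[ Z_{n,2} ≤ 1 ]. -/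
/-!
Put `T = ∏_{p ≤ n} p ^ ε_p`. An integer `k ≤ n` is determined by its exponents at the primes
`p ≤ n`, so independence and the geometric laws give `P[T = k] = c / k` with
`c = ∏_{p ≤ n} (1 - 1/p)`: on `{1, …, n}` the law of `T` is proportional to the harmonic law.
Since `Z_{n,2} = log T / log n`, the event `{Z_{n,2} ≤ 1}` is `{T ≤ n}`, and by additivity
`Z_{n,1} = φ(T) / ϑ(log n)`. Hence `H_n` is distributed as `T` conditioned on `Z_{n,2} ≤ 1`.
-/

open MeasureTheory ProbabilityTheory Filter Real Set
open scoped ENNReal NNReal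

noncomputable section

/-- The additive function `ι[ϑ]` induced by `ϑ`: `ι[ϑ](k) = ∑_p ϑ(ν_p(k) log p)`. -/
def inducedAdditive (ϑ : ℝ → ℝ) (k : ℕ) : ℝ :=
  ∑ p ∈ k.primeFactors, ϑ (k.factorization p * Real.log p)

namespace Nat

lemma factorization_prod_pow_of_prime {s : Finset ℕ} (hs : ∀ p ∈ s, p.Prime) (e : ℕ → ℕ)
    {q : ℕ} (hq : q ∈ s) : (∏ p ∈ s, p ^ e p).factorization q = e q := by
  rw [factorization_prod fun p hp => pow_ne_zero _ (hs p hp).ne_zero, Finset.sum_apply',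
    Finset.sum_eq_single_of_mem q hq fun p hp hpq => ?_, (hs q hq).factorization_pow,
    Finsupp.single_eq_same]
  rw [(hs p hp).factorization_pow, Finsupp.single_eq_of_ne' hpq]

lemma prod_pow_factorization_of_primeFactors_subset {s : Finset ℕ} {k : ℕ} (hk : k ≠ 0)
    (hsub : k.primeFactors ⊆ s) : ∏ p ∈ s, p ^ k.factorization p = k := by
  rw [← support_factorization] at hsub
  rw [← Finsupp.prod_of_support_subset _ hsub (· ^ ·) fun _ _ => pow_zero _]
  exact prod_factorization_pow_eq_self hk

lemma primeFactors_prod_pow_subset {s : Finset ℕ} (hs : ∀ p ∈ s, p.Prime) (e : ℕ → ℕ) :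
    (∏ p ∈ s, p ^ e p).primeFactors ⊆ s := by
  intro q hq
  obtain ⟨hq, hdvd, -⟩ := mem_primeFactors.mp hq
  obtain ⟨p, hp, hqp⟩ := hq.prime.exists_mem_finset_dvd hdvd
  rwa [(prime_dvd_prime_iff_eq hq (hs p hp)).mp (hq.dvd_of_dvd_pow hqp)]

lemma prod_pow_eq_iff_forall_eq_factorization {s : Finset ℕ} (hs : ∀ p ∈ s, p.Prime)
    (e : ℕ → ℕ) {k : ℕ} (hk : k ≠ 0) (hsub : k.primeFactors ⊆ s) :
    ∏ p ∈ s, p ^ e p = k ↔ ∀ p ∈ s, e p = k.factorization p := by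
  constructor
  · rintro rfl p hp
    exact (factorization_prod_pow_of_prime hs e hp).symm
  · intro h
    rw [Finset.prod_congr rfl fun p hp => by rw [h p hp]]
    exact prod_pow_factorization_of_primeFactors_subset hk hsub

end Nat

lemma primeFactors_subset_primesUpTo {n k : ℕ} (hk : k ∈ Finset.Icc 1 n) :
    k.primeFactors ⊆ primesUpTo n := fun _ hp =>
  mem_primesUpTo.mpr
    ⟨(Nat.le_of_dvd (Finset.mem_Icc.mp hk).1 (Nat.dvd_of_mem_primeFactors hp)).trans
      (Finset.mem_Icc.mp hk).2, Nat.prime_of_mem_primeFactors hp⟩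

lemma inducedAdditive_prime_pow {ϑ : ℝ → ℝ} (hϑ : ϑ 0 = 0) {p : ℕ} (hp : p.Prime) (e : ℕ) :
    inducedAdditive ϑ (p ^ e) = ϑ (e * Real.log p) := by
  rcases Nat.eq_zero_or_pos e with rfl | he
  · simp [inducedAdditive, hϑ]
  · rw [inducedAdditive, Nat.primeFactors_prime_pow he.ne' hp, Finset.sum_singleton,
      hp.factorization_pow, Finsupp.single_eq_same]

lemma sum_inducedAdditive_prime_pow {ϑ : ℝ → ℝ} (hϑ : ϑ 0 = 0) {s : Finset ℕ}
    (hs : ∀ p ∈ s, p.Prime) (e : ℕ → ℕ) :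
    ∑ p ∈ s, inducedAdditive ϑ (p ^ e p) = inducedAdditive ϑ (∏ p ∈ s, p ^ e p) := by
  rw [inducedAdditive, Finset.sum_subset (Nat.primeFactors_prod_pow_subset hs e) fun p _ hp => ?_]
  · refine Finset.sum_congr rfl fun p hp => ?_
    rw [inducedAdditive_prime_pow hϑ (hs p hp), Nat.factorization_prod_pow_of_prime hs e hp]
  · rw [Finsupp.notMem_support_iff.mp (Nat.support_factorization _ ▸ hp)]
    simp [hϑ]

lemma inv_log_mul_sum_le_one_iff {s : Finset ℕ} (hs : ∀ p ∈ s, 0 < p) (e : ℕ → ℕ) {n : ℕ}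
    (hn : 1 < n) :
    (Real.log n)⁻¹ * ∑ p ∈ s, (e p : ℝ) * Real.log p ≤ 1 ↔ ∏ p ∈ s, p ^ e p ∈ Finset.Icc 1 n := by
  have hT : 1 ≤ ∏ p ∈ s, p ^ e p := Finset.one_le_prod' fun p hp => Nat.one_le_pow _ _ (hs p hp)
  have hlog : ∑ p ∈ s, (e p : ℝ) * Real.log p = Real.log (∏ p ∈ s, p ^ e p : ℕ) := by
    push_cast
    rw [Real.log_prod fun p hp => by have := hs p hp; positivity]
    simp_rw [Real.log_pow]
  rw [inv_mul_eq_div, div_le_one (Real.log_pos (by exact_mod_cast hn)), hlog,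
    Real.log_le_log_iff (by exact_mod_cast hT) (by positivity), Nat.cast_le, Finset.mem_Icc]
  exact ⟨fun h => ⟨hT, h⟩, And.right⟩

section Probability

variable {Ω Ω' : Type*} [MeasurableSpace Ω] [MeasurableSpace Ω']

lemma setIntegral_preimage_finset_eq_sum (μ : Measure Ω) [IsFiniteMeasure μ] {X : Ω → ℕ}
    (hX : Measurable X) (S : Finset ℕ) (g : ℕ → ℝ) :
    ∫ ω in X ⁻¹' S, g (X ω) ∂μ = ∑ k ∈ S, g k * μ.real (X ⁻¹' {k}) := by
  rw [← setIntegral_map S.finite_toSet.measurableSet (by fun_prop) hX.aemeasurable,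
    setIntegral_finset _ IntegrableOn.finset]
  refine Finset.sum_congr rfl fun k _ => ?_
  rw [smul_eq_mul, mul_comm, map_measureReal_apply hX (measurableSet_singleton k)]

lemma integral_comp_eq_setIntegral_comp_div {P : Measure Ω} [IsFiniteMeasure P]
    {P' : Measure Ω'} [IsProbabilityMeasure P'] {T : Ω → ℕ} {H : Ω' → ℕ}
    (hT : Measurable T) (hH : Measurable H) {S : Finset ℕ} (hHS : ∀ᵐ ω ∂P', H ω ∈ S)
    {c : ℝ} (hc : c ≠ 0) (hTH : ∀ k ∈ S, P.real (T ⁻¹' {k}) = c * P'.real (H ⁻¹' {k}))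
    (g : ℕ → ℝ) :
    ∫ ω, g (H ω) ∂P' = (∫ ω in T ⁻¹' S, g (T ω) ∂P) / P.real (T ⁻¹' S) := by
  have hrestrict : P'.restrict (H ⁻¹' S) = P' := Measure.restrict_eq_self_of_ae_mem hHS
  have hmass : ∑ k ∈ S, P'.real (H ⁻¹' {k}) = 1 := by
    rw [sum_measureReal_preimage_singleton S fun k _ => hH (measurableSet_singleton k),
      ← measureReal_restrict_apply_univ, hrestrict, probReal_univ]
  have hden : P.real (T ⁻¹' S) = c := by
    rw [← sum_measureReal_preimage_singleton S fun k _ => hT (measurableSet_singleton k),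
      Finset.sum_congr rfl hTH, ← Finset.mul_sum, hmass, mul_one]
  rw [hden, setIntegral_preimage_finset_eq_sum P hT, ← hrestrict,
    setIntegral_preimage_finset_eq_sum P' hH, eq_div_iff hc, Finset.sum_mul]
  refine Finset.sum_congr rfl fun k hk => ?_
  rw [hTH k hk]
  ring

lemma ProbabilityTheory.iIndepFun.measure_prod_pow_eq_of_geomLaw {P : Measure Ω} {ε : ℕ → Ω → ℕ}
    (hindep : iIndepFun (fun p : {p : ℕ // p.Prime} => ε p) P)
    (hgeom : ∀ p, p.Prime → GeomLaw P p (ε p)) {s : Finset ℕ} (hs : ∀ p ∈ s, p.Prime)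
    {k : ℕ} (hk : k ≠ 0) (hsub : k.primeFactors ⊆ s) :
    P {ω | ∏ p ∈ s, p ^ ε p ω = k}
      = ∏ p ∈ s, (1 - (p : ℝ≥0∞)⁻¹) * (p : ℝ≥0∞)⁻¹ ^ k.factorization p := by
  have hset : {ω | ∏ p ∈ s, p ^ ε p ω = k}
      = ⋂ i ∈ s.subtype Nat.Prime,
          (fun p : {p : ℕ // p.Prime} => ε p) i ⁻¹' {k.factorization i} := by
    ext ω
    simp only [Set.mem_ofPred_eq, Nat.prod_pow_eq_iff_forall_eq_factorization hs _ hk hsub,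
      Set.mem_iInter, Finset.mem_subtype, Set.mem_preimage, Set.mem_singleton_iff,
      Subtype.forall]
    exact ⟨fun h p _ hp => h p hp, fun h p hp => h p (hs p hp) hp⟩
  rw [hset, hindep.measure_inter_preimage_eq_mul _ fun i _ => measurableSet_singleton _,
    Finset.prod_subtype_eq_prod_filter fun p => P (ε p ⁻¹' {k.factorization p}),
    Finset.filter_true_of_mem hs]
  exact Finset.prod_congr rfl fun p hp => hgeom p (hs p hp) _

lemma ProbabilityTheory.iIndepFun.measureReal_prod_pow_eq_of_geomLaw {P : Measure Ω} {ε : ℕ → Ω → ℕ}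
    (hindep : iIndepFun (fun p : {p : ℕ // p.Prime} => ε p) P)
    (hgeom : ∀ p, p.Prime → GeomLaw P p (ε p)) {s : Finset ℕ} (hs : ∀ p ∈ s, p.Prime)
    {k : ℕ} (hk : k ≠ 0) (hsub : k.primeFactors ⊆ s) :
    P.real {ω | ∏ p ∈ s, p ^ ε p ω = k} = (∏ p ∈ s, (1 - (p : ℝ)⁻¹)) / k := by
  have hterm : ∀ p ∈ s, ((1 - (p : ℝ≥0∞)⁻¹) * (p : ℝ≥0∞)⁻¹ ^ k.factorization p).toReal
      = (1 - (p : ℝ)⁻¹) * (p : ℝ)⁻¹ ^ k.factorization p := by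
    intro p hp
    have hp1 : (p : ℝ≥0∞)⁻¹ ≤ 1 := ENNReal.inv_le_one.mpr (by exact_mod_cast (hs p hp).one_le)
    simp [ENNReal.toReal_sub_of_le hp1 ENNReal.one_ne_top]
  have hk' : (∏ p ∈ s, (p : ℝ) ^ k.factorization p) = k := by
    exact_mod_cast Nat.prod_pow_factorization_of_primeFactors_subset hk hsub
  rw [measureReal_def, hindep.measure_prod_pow_eq_of_geomLaw hgeom hs hk hsub, ENNReal.toReal_prod,
    Finset.prod_congr rfl hterm, Finset.prod_mul_distrib, div_eq_mul_inv, ← hk',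
    ← Finset.prod_inv_distrib]
  simp_rw [inv_pow]

lemma sum_Icc_one_div_pos {n : ℕ} (hn : 1 ≤ n) : 0 < ∑ j ∈ Finset.Icc 1 n, (1 : ℝ) / j :=
  Finset.sum_pos (fun j hj => by have := (Finset.mem_Icc.mp hj).1; positivity)
    ⟨1, Finset.mem_Icc.mpr ⟨le_rfl, hn⟩⟩

lemma HarmonicLaw.measureReal_eq {P : Measure Ω} {n : ℕ} {H : Ω → ℕ} (hH : HarmonicLaw P n H)
    {k : ℕ} (hk : k ∈ Finset.Icc 1 n) :
    P.real {ω | H ω = k} = 1 / (k * ∑ j ∈ Finset.Icc 1 n, (1 : ℝ) / j) := by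
  rw [measureReal_def, hH k hk, ENNReal.toReal_ofReal (by positivity)]

lemma HarmonicLaw.ae_mem_Icc {P : Measure Ω} [IsProbabilityMeasure P] {n : ℕ} {H : Ω → ℕ}
    (hHm : Measurable H) (hH : HarmonicLaw P n H) (hn : 1 ≤ n) :
    ∀ᵐ ω ∂P, H ω ∈ Finset.Icc 1 n := by
  have hL := sum_Icc_one_div_pos hn
  have hmass : ∑ k ∈ Finset.Icc 1 n, 1 / ((k : ℝ) * ∑ j ∈ Finset.Icc 1 n, (1 : ℝ) / j) = 1 := by
    simp_rw [← div_div]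
    rw [← Finset.sum_div, div_self hL.ne']
  refine (ae_iff_measure_eq (p := fun ω => H ω ∈ (Finset.Icc 1 n : Set ℕ))
    (hHm (Finset.measurableSet _)).nullMeasurableSet).mpr ?_
  rw [measure_univ]
  change P (H ⁻¹' (Finset.Icc 1 n : Set ℕ)) = 1
  rw [← sum_measure_preimage_singleton _ fun k _ => hHm (measurableSet_singleton k)]
  refine (Finset.sum_congr rfl hH).trans ?_
  rw [← ENNReal.ofReal_sum_of_nonneg fun k _ => by positivity, hmass,
    ENNReal.ofReal_one]

end Probability

theorem reduction_to_joint_statistic_general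
    {Ω : Type*} [MeasurableSpace Ω] (P : Measure Ω) [IsProbabilityMeasure P]
    (ε : ℕ → Ω → ℕ) (hmeas : ∀ p, Nat.Prime p → Measurable (ε p))
    (hindep : iIndepFun (fun p : {p : ℕ // p.Prime} => ε p) P)
    (hgeom : ∀ p, Nat.Prime p → GeomLaw P p (ε p))
    {Ω' : Type*} [MeasurableSpace Ω'] (P' : Measure Ω') [IsProbabilityMeasure P']
    (ϑ : ℝ → ℝ) (α : ℝ) (hϑ : MemV ϑ α)
    (n : ℕ) (hn : 2 ≤ n)
    (H : Ω' → ℕ) (hHmeas : Measurable H) (hH : HarmonicLaw P' n H)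
    (Ψ : ℝ → ℝ) :
    ∫ ω, Ψ (inducedAdditive ϑ (H ω) / ϑ (Real.log n)) ∂P' =
      (∫ ω in {ω | (Real.log n)⁻¹ * ∑ p ∈ primesUpTo n, (ε p ω : ℝ) * Real.log p ≤ 1},
          Ψ ((ϑ (Real.log n))⁻¹ * ∑ p ∈ primesUpTo n, inducedAdditive ϑ (p ^ ε p ω)) ∂P) /
        (P {ω | (Real.log n)⁻¹ * ∑ p ∈ primesUpTo n, (ε p ω : ℝ) * Real.log p ≤ 1}).toReal := by
  have hs : ∀ p ∈ primesUpTo n, p.Prime := fun p hp => (mem_primesUpTo.mp hp).2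
  set T : Ω → ℕ := fun ω => ∏ p ∈ primesUpTo n, p ^ ε p ω
  have hT : Measurable T :=
    Finset.measurable_prod _ fun p hp => measurable_const.pow (hmeas p (hs p hp))
  have hZ₂ : {ω | (Real.log n)⁻¹ * ∑ p ∈ primesUpTo n, (ε p ω : ℝ) * Real.log p ≤ 1}
      = T ⁻¹' Finset.Icc 1 n := Set.ext fun ω =>
    inv_log_mul_sum_le_one_iff (fun p hp => (hs p hp).pos) (ε · ω) (by omega)
  have hZ₁ : ∀ ω, (ϑ (Real.log n))⁻¹ * ∑ p ∈ primesUpTo n, inducedAdditive ϑ (p ^ ε p ω)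
      = inducedAdditive ϑ (T ω) / ϑ (Real.log n) := fun ω => by
    rw [sum_inducedAdditive_prime_pow hϑ.1 hs, inv_mul_eq_div]
  set L := ∑ j ∈ Finset.Icc 1 n, (1 : ℝ) / j
  set c := ∏ p ∈ primesUpTo n, (1 - (p : ℝ)⁻¹)
  have hc : c ≠ 0 := Finset.prod_ne_zero_iff.mpr fun p hp =>
    sub_ne_zero.mpr (inv_ne_one.mpr (by exact_mod_cast (hs p hp).ne_one)).symm
  have hL : L ≠ 0 := (sum_Icc_one_div_pos (by omega)).ne'
  have hTH : ∀ k ∈ Finset.Icc 1 n, P.real (T ⁻¹' {k}) = c * L * P'.real (H ⁻¹' {k}) := by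
    intro k hk
    have hk0 : k ≠ 0 := Nat.one_le_iff_ne_zero.mp (Finset.mem_Icc.mp hk).1
    rw [show T ⁻¹' {k} = {ω | T ω = k} from rfl, show H ⁻¹' {k} = {ω | H ω = k} from rfl,
      hindep.measureReal_prod_pow_eq_of_geomLaw hgeom hs hk0
        (primeFactors_subset_primesUpTo hk),
      hH.measureReal_eq hk, mul_one_div, mul_div_mul_right _ _ hL]
  rw [hZ₂, ← measureReal_def]
  simp only [hZ₁]
  exact integral_comp_eq_setIntegral_comp_div hT hHmeas (hH.ae_mem_Icc hHmeas (by omega))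
    (mul_ne_zero hc hL) hTH fun k => Ψ (inducedAdditive ϑ k / ϑ (Real.log n))

/-- Reduction of the main theorem to the joint statistic: for `φ = ι[ϑ]`,
`Z_{n,1} = ϑ(log n)⁻¹ ∑_{p ∈ Pₙ} φ(p^{ε_p})` and `Z_{n,2} = (log n)⁻¹ ∑_{p ∈ Pₙ} ε_p log p`,
one has `E[Ψ(φ(Hₙ)/ϑ(log n))] = E[Ψ(Z_{n,1}) 1_{Z_{n,2} ≤ 1}]/P[Z_{n,2} ≤ 1]` for every
bounded measurable `Ψ` and every `n ≥ 2`. -/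
theorem reduction_to_joint_statistic
    {Ω : Type*} [MeasurableSpace Ω] (P : Measure Ω) [IsProbabilityMeasure P]
    (ε : ℕ → Ω → ℕ) (hmeas : ∀ p, Nat.Prime p → Measurable (ε p))
    (hindep : iIndepFun (fun p : {p : ℕ // p.Prime} => ε p) P)
    (hgeom : ∀ p, Nat.Prime p → GeomLaw P p (ε p))
    {Ω' : Type*} [MeasurableSpace Ω'] (P' : Measure Ω') [IsProbabilityMeasure P']
    (ϑ : ℝ → ℝ) (α : ℝ) (hϑ : MemV ϑ α)
    (n : ℕ) (hn : 2 ≤ n)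
    (H : Ω' → ℕ) (hHmeas : Measurable H) (hH : HarmonicLaw P' n H)
    (Ψ : ℝ → ℝ) (hΨm : Measurable Ψ) (hΨb : ∃ C, ∀ x, |Ψ x| ≤ C) :
    ∫ ω, Ψ (inducedAdditive ϑ (H ω) / ϑ (Real.log n)) ∂P' =
      (∫ ω in {ω | (Real.log n)⁻¹ * ∑ p ∈ primesUpTo n, (ε p ω : ℝ) * Real.log p ≤ 1},
          Ψ ((ϑ (Real.log n))⁻¹ * ∑ p ∈ primesUpTo n, inducedAdditive ϑ (p ^ ε p ω)) ∂P) /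
        (P {ω | (Real.log n)⁻¹ * ∑ p ∈ primesUpTo n, (ε p ω : ℝ) * Real.log p ≤ 1}).toReal :=
  reduction_to_joint_statistic_general P ε hmeas hindep hgeom P' ϑ α hϑ n hn H hHmeas hH Ψ
end
end
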